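/- Let λ be a strict partition. The operations e*_1̄ and f*_1̄ define maps SetDecTab*(λ) → SetDecTab*(λ) ⊔ {0}; that is, whenever e*_1̄(T) ≠ 0 or f*_1̄(T) ≠ 0 for T ∈ SetDecTab*(λ), the resulting filling is again an element of SetDecTab*(λ). Moreover, for T,U ∈ SetDecTab*(λ) one has e*_1̄(T) = U if and only if T = f*_1̄(U). -/

import Mathlib

open scoped Classical

/-! ## Shifted diagrams, hook words, decomposition tableaux -/

/-- A strict partition, given as its (strictly decreasing) list of positive parts. -/
def IsStrictPartition (lam : List ℕ) : Prop :=
  lam.Chain' (· > ·) ∧ ∀ p ∈ lam, 0 < p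

/-- A partition (weakly decreasing list of positive parts). -/
def IsPartition (lam : List ℕ) : Prop :=
  lam.Chain' (· ≥ ·) ∧ ∀ p ∈ lam, 0 < p

/-- `(i, j)` (1-indexed row `i`, column `j`) is a box of the shifted diagram `SD_lam`. -/
def InSD (lam : List ℕ) (i j : ℕ) : Prop :=
  1 ≤ i ∧ i ≤ lam.length ∧ i ≤ j ∧ j < i + lam.getD (i - 1) 0

/-- `(i, j)` is a box of the (unshifted) Young diagram of `lam`. -/
def InYD (lam : List ℕ) (i j : ℕ) : Prop :=
  1 ≤ i ∧ i ≤ lam.length ∧ 1 ≤ j ∧ j ≤ lam.getD (i - 1) 0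

/-- The word given by row `i` (1-indexed) of a shifted tableau `T`, read left to right. -/
def rowWord (lam : List ℕ) (T : ℕ × ℕ → ℕ) (i : ℕ) : List ℕ :=
  (List.range (lam.getD (i - 1) 0)).map fun j => T (i, i + j)

/-- A hook word: a sequence of positive integers `w₁ ≥ ⋯ ≥ w_m < w_{m+1} < ⋯ < w_n`
for some `m ∈ [n]`. -/
def IsHookWord (w : List ℕ) : Prop :=
  (∀ v ∈ w, 0 < v) ∧
  ∃ m, 1 ≤ m ∧ m ≤ w.length ∧
    (∀ j : ℕ, j + 1 < m → w.getD (j + 1) 0 ≤ w.getD j 0) ∧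
    (∀ j : ℕ, m ≤ j + 1 → j + 1 < w.length → w.getD j 0 < w.getD (j + 1) 0)

/-- `r` is a hook subword of maximal length in `s`. -/
def IsMaxHookSubwordIn (r s : List ℕ) : Prop :=
  r.Sublist s ∧ IsHookWord r ∧
    ∀ t : List ℕ, t.Sublist s → IsHookWord t → t.length ≤ r.length

/-- A (semistandard) decomposition tableau of shifted shape `lam`. -/
def IsDecompTab (lam : List ℕ) (T : ℕ × ℕ → ℕ) : Prop :=
  (∀ i, 1 ≤ i → i ≤ lam.length → IsHookWord (rowWord lam T i)) ∧
  (∀ i, 1 ≤ i → i + 1 ≤ lam.length →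
    IsMaxHookSubwordIn (rowWord lam T i) (rowWord lam T (i + 1) ++ rowWord lam T i))

/-! ## Set-valued decomposition tableaux -/

/-- A set-valued decomposition tableau: boxes of `SD_lam` are filled by finite nonempty
sets of positive integers, all of whose distributions are decomposition tableaux. -/
def IsSetDecompTab (lam : List ℕ) (T : ℕ × ℕ → Finset ℕ) : Prop :=
  (∀ i j, InSD lam i j → (T (i, j)).Nonempty ∧ 0 ∉ T (i, j)) ∧
  (∀ d : ℕ × ℕ → ℕ, (∀ i j, InSD lam i j → d (i, j) ∈ T (i, j)) → IsDecompTab lam d)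

/-- Set-valued decomposition tableau whose every entry is contained in `{1, …, n}`. -/
def IsSetDecompTabN (n : ℕ) (lam : List ℕ) (T : ℕ × ℕ → Finset ℕ) : Prop :=
  IsSetDecompTab lam T ∧ ∀ i j, InSD lam i j → ∀ v ∈ T (i, j), v ≤ n

/-! ## Reverse row reading words -/

/-- The boxes of `SD_lam` in reverse row reading order: the first row read right to left,
then the second row right to left, and so on. -/
def revrowBoxes (lam : List ℕ) : List (ℕ × ℕ) :=
  (List.range lam.length).flatMap fun r =>
    (List.range (lam.getD r 0)).reverse.map fun j => (r + 1, r + 1 + j)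

/-- Position of a box in the reverse row reading order. -/
def boxIdx (lam : List ℕ) (b : ℕ × ℕ) : ℕ := (revrowBoxes lam).idxOf b

/-- The reverse row reading word of a set-valued tableau, with each letter labelled by
its box: entries within each box are listed in decreasing order. -/
def revrowEntries (lam : List ℕ) (T : ℕ × ℕ → Finset ℕ) : List ((ℕ × ℕ) × ℕ) :=
  (revrowBoxes lam).flatMap fun b => (((T b).sort (· ≤ ·)).reverse).map fun v => (b, v)

/-- The reverse row reading word of a set-valued tableau. -/
def revrowWord (lam : List ℕ) (T : ℕ × ℕ → Finset ℕ) : List ℕ :=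
  (revrowEntries lam T).map Prod.snd

/-- `wtSet lam T k` is the number of boxes of `T` whose entry contains `k`. -/
noncomputable def wtSet (lam : List ℕ) (T : ℕ × ℕ → Finset ℕ) (k : ℕ) : ℕ :=
  ((revrowBoxes lam).filter fun b => decide (k ∈ T b)).length

/-- `wtNum lam T k` is the number of boxes of an ordinary tableau `T` equal to `k`. -/
noncomputable def wtNum (lam : List ℕ) (T : ℕ × ℕ → ℕ) (k : ℕ) : ℕ :=
  ((revrowBoxes lam).filter fun b => decide (T b = k)).length

/-! ## Parenthesis pairing: `i`-unpaired letters -/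

/-- Number of unmatched `i+1`'s ( "(" ) after scanning `u` left to right,
where each `i` ( ")" ) cancels the most recent unmatched `i+1`. -/
def openCount (i : ℕ) (u : List ℕ) : ℕ :=
  u.foldl (fun acc a => if a = i + 1 then acc + 1 else if a = i then acc - 1 else acc) 0

/-- Number of unmatched `i`'s ( ")" ) after scanning `u` right to left,
where each `i+1` ( "(" ) cancels the nearest unmatched `i` to its right. -/
def closeCount (i : ℕ) (u : List ℕ) : ℕ :=
  u.foldr (fun a acc => if a = i then acc + 1 else if a = i + 1 then acc - 1 else acc) 0

/-- Position `p` of `w` holds an `i`-unpaired letter equal to `i+1`. -/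
def UnpairedHigh (i : ℕ) (w : List ℕ) (p : ℕ) : Prop :=
  p < w.length ∧ w.getD p 0 = i + 1 ∧ closeCount i (w.drop (p + 1)) = 0

/-- Position `p` of `w` holds an `i`-unpaired letter equal to `i`. -/
def UnpairedLow (i : ℕ) (w : List ℕ) (p : ℕ) : Prop :=
  p < w.length ∧ w.getD p 0 = i ∧ openCount i (w.take p) = 0

instance (i : ℕ) (w : List ℕ) (p : ℕ) : Decidable (UnpairedHigh i w p) := by
  unfold UnpairedHigh; infer_instance

instance (i : ℕ) (w : List ℕ) (p : ℕ) : Decidable (UnpairedLow i w p) := by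
  unfold UnpairedLow; infer_instance

/-- The number of `i`-unpaired letters equal to `i+1` in `w`. -/
def numUnpairedHigh (i : ℕ) (w : List ℕ) : ℕ :=
  ((List.range w.length).filter fun p => decide (UnpairedHigh i w p)).length

/-- The number of `i`-unpaired letters equal to `i` in `w`. -/
def numUnpairedLow (i : ℕ) (w : List ℕ) : ℕ :=
  ((List.range w.length).filter fun p => decide (UnpairedLow i w p)).length

/-! ## Iterated partial operators and string lengths -/

/-- Iterate a partial operator, with the convention that `0` (i.e. `none`) is absorbing. -/
def iterOpt {α : Type*} (g : α → Option α) : ℕ → α → Option α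
  | 0, a => some a
  | k + 1, a => (g a).bind (iterOpt g k)

/-- `m` is the exact string length `sup {k | g^k a ≠ 0}` of `a` under `g`. -/
def HasStringLen {α : Type*} (g : α → Option α) (a : α) (m : ℕ) : Prop :=
  iterOpt g m a ≠ none ∧ iterOpt g (m + 1) a = none

/-! ## The queer crystal operators on set-valued decomposition tableaux -/

/-- The raising crystal operator `e_i` on set-valued decomposition tableaux. -/
noncomputable def eCrystal (lam : List ℕ) (i : ℕ) (T : ℕ × ℕ → Finset ℕ) :
    Option (ℕ × ℕ → Finset ℕ) :=
  if h : ∃ p, UnpairedHigh i (revrowWord lam T) p then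
    let xy := ((revrowEntries lam T).getD (Nat.find h) ((0, 0), 0)).1
    let T1 := Function.update T xy (insert i ((T xy).erase (i + 1)))
    if IsSetDecompTab lam T1 then some T1
    else if _hab : ∃ m, m < boxIdx lam xy ∧ i ∈ T ((revrowBoxes lam).getD m (0, 0)) ∧
        i + 1 ∈ T ((revrowBoxes lam).getD m (0, 0)) then
      let m := Nat.findGreatest (fun m => m < boxIdx lam xy ∧
          i ∈ T ((revrowBoxes lam).getD m (0, 0)) ∧
          i + 1 ∈ T ((revrowBoxes lam).getD m (0, 0))) (boxIdx lam xy)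
      let ab := (revrowBoxes lam).getD m (0, 0)
      some (Function.update (Function.update T ab ((T ab).erase (i + 1))) xy
        (insert i (T xy)))
    else none
  else none

/-- The lowering crystal operator `f_i` on set-valued decomposition tableaux. -/
noncomputable def fCrystal (lam : List ℕ) (i : ℕ) (T : ℕ × ℕ → Finset ℕ) :
    Option (ℕ × ℕ → Finset ℕ) :=
  if _h : ∃ p, UnpairedLow i (revrowWord lam T) p then
    let p := Nat.findGreatest (fun p => UnpairedLow i (revrowWord lam T) p)
      (revrowWord lam T).length
    let xy := ((revrowEntries lam T).getD p ((0, 0), 0)).1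
    let T1 := Function.update T xy (insert (i + 1) ((T xy).erase i))
    if IsSetDecompTab lam T1 then some T1
    else if hab : ∃ m, boxIdx lam xy < m ∧ m < (revrowBoxes lam).length ∧
        i ∈ T ((revrowBoxes lam).getD m (0, 0)) ∧
        i + 1 ∈ T ((revrowBoxes lam).getD m (0, 0)) then
      let ab := (revrowBoxes lam).getD (Nat.find hab) (0, 0)
      some (Function.update (Function.update T ab ((T ab).erase i)) xy
        (insert (i + 1) (T xy)))
    else none
  else none

/-- The queer raising operator `e_1̄` on set-valued decomposition tableaux. -/
noncomputable def eBarCrystal (lam : List ℕ) (T : ℕ × ℕ → Finset ℕ) :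
    Option (ℕ × ℕ → Finset ℕ) :=
  if h : ∃ p, p < (revrowWord lam T).length ∧ (revrowWord lam T).getD p 0 = 2 ∧
      ∀ q < p, (revrowWord lam T).getD q 0 ≠ 1 then
    let xy := ((revrowEntries lam T).getD (Nat.find h) ((0, 0), 0)).1
    if 1 ∈ T xy then none
    else some (Function.update T xy (insert 1 ((T xy).erase 2)))
  else none

/-- The queer lowering operator `f_1̄` on set-valued decomposition tableaux. -/
noncomputable def fBarCrystal (lam : List ℕ) (T : ℕ × ℕ → Finset ℕ) :
    Option (ℕ × ℕ → Finset ℕ) :=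
  if h : ∃ p, p < (revrowWord lam T).length ∧ (revrowWord lam T).getD p 0 = 1 ∧
      ∀ q < p, (revrowWord lam T).getD q 0 ≠ 2 then
    let xy := ((revrowEntries lam T).getD (Nat.find h) ((0, 0), 0)).1
    some (Function.update T xy (insert 2 ((T xy).erase 1)))
  else none
/-! ## Multiset-valued decomposition tableaux -/

/-- A multiset-valued decomposition tableau in which only the entry `1` may repeat
within a box, all of whose distributions are decomposition tableaux. -/
def IsMultisetDecompTab (lam : List ℕ) (T : ℕ × ℕ → Multiset ℕ) : Prop :=
  (∀ i j, InSD lam i j → T (i, j) ≠ 0 ∧ 0 ∉ T (i, j) ∧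
      ∀ v : ℕ, v ≠ 1 → (T (i, j)).count v ≤ 1) ∧
  (∀ d : ℕ × ℕ → ℕ, (∀ i j, InSD lam i j → d (i, j) ∈ T (i, j)) → IsDecompTab lam d)

/-- Reverse row reading word of a multiset-valued tableau, with boxes recorded. -/
def revrowEntriesM (lam : List ℕ) (T : ℕ × ℕ → Multiset ℕ) : List ((ℕ × ℕ) × ℕ) :=
  (revrowBoxes lam).flatMap fun b => (((T b).sort (· ≤ ·)).reverse).map fun v => (b, v)

/-- Reverse row reading word of a multiset-valued tableau. -/
def revrowWordM (lam : List ℕ) (T : ℕ × ℕ → Multiset ℕ) : List ℕ :=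
  (revrowEntriesM lam T).map Prod.snd

/-- The operator `e*_1̄` on multiset-valued decomposition tableaux: if the first `2` of
the reverse row reading word occurs before every `1`, change it to a `1`. -/
noncomputable def eStarBar (lam : List ℕ) (T : ℕ × ℕ → Multiset ℕ) :
    Option (ℕ × ℕ → Multiset ℕ) :=
  if h : ∃ p, p < (revrowWordM lam T).length ∧ (revrowWordM lam T).getD p 0 = 2 ∧
      ∀ q < p, (revrowWordM lam T).getD q 0 ≠ 1 then
    let b := ((revrowEntriesM lam T).getD (Nat.find h) ((0, 0), 0)).1
    some (Function.update T b (1 ::ₘ (T b).erase 2))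
  else none

/-- The operator `f*_1̄` on multiset-valued decomposition tableaux: if the first `1` of
the reverse row reading word occurs before every `2`, change it to a `2`. -/
noncomputable def fStarBar (lam : List ℕ) (T : ℕ × ℕ → Multiset ℕ) :
    Option (ℕ × ℕ → Multiset ℕ) :=
  if h : ∃ p, p < (revrowWordM lam T).length ∧ (revrowWordM lam T).getD p 0 = 1 ∧
      ∀ q < p, (revrowWordM lam T).getD q 0 ≠ 2 then
    let b := ((revrowEntriesM lam T).getD (Nat.find h) ((0, 0), 0)).1
    some (Function.update T b (2 ::ₘ (T b).erase 1))
  else none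

/-! ## Linked `i`-words and square-root crystal operators -/

/-- Characters of a linked `i`-word: `(`, `)` and `-`. -/
inductive PChar : Type
  | op : PChar
  | cl : PChar
  | dash : PChar
  deriving DecidableEq

/-- The linked `i`-word of a set-valued tableau, with each character labelled by its box:
a box containing `i` but not `i+1` gives `)`, a box containing `i+1` but not `i` gives `(`,
and a box containing both gives `)-(`; boxes are read in reverse row reading order. -/
def tokens (lam : List ℕ) (i : ℕ) (T : ℕ × ℕ → Finset ℕ) : List (PChar × (ℕ × ℕ)) :=
  (revrowBoxes lam).flatMap fun b =>
    if i ∈ T b ∧ i + 1 ∈ T b then [(PChar.cl, b), (PChar.dash, b), (PChar.op, b)]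
    else if i ∈ T b then [(PChar.cl, b)]
    else if i + 1 ∈ T b then [(PChar.op, b)]
    else []

/-- Unmatched `(`s after scanning left to right (ignoring dashes). -/
def openCnt (u : List PChar) : ℕ :=
  u.foldl (fun acc a => match a with
    | PChar.op => acc + 1
    | PChar.cl => acc - 1
    | PChar.dash => acc) 0

/-- Unmatched `)`s after scanning right to left (ignoring dashes). -/
def closeCnt (u : List PChar) : ℕ :=
  u.foldr (fun a acc => match a with
    | PChar.cl => acc + 1
    | PChar.op => acc - 1
    | PChar.dash => acc) 0

/-- Position `p` holds an unpaired `(`. -/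
def UnpairedOp (ws : List PChar) (p : ℕ) : Prop :=
  p < ws.length ∧ ws.getD p PChar.dash = PChar.op ∧ closeCnt (ws.drop (p + 1)) = 0

/-- Position `p` holds an unpaired `)`. -/
def UnpairedCl (ws : List PChar) (p : ℕ) : Prop :=
  p < ws.length ∧ ws.getD p PChar.dash = PChar.cl ∧ openCnt (ws.take p) = 0

/-- A fully matched (balanced) parenthesis word, ignoring dashes. -/
def BalancedP (u : List PChar) : Prop :=
  u.count PChar.op = u.count PChar.cl ∧
  ∀ k, (u.take k).count PChar.cl ≤ (u.take k).count PChar.op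

/-- The `(` at position `a` is matched with the `)` at position `b`. -/
def MatchedPair (ws : List PChar) (a b : ℕ) : Prop :=
  a < b ∧ b < ws.length ∧ ws.getD a PChar.dash = PChar.op ∧
  ws.getD b PChar.dash = PChar.cl ∧ BalancedP ((ws.drop (a + 1)).take (b - (a + 1)))

/-- Generating relation for equivalence classes of characters: a matched pair together
with everything between them lies in one class, and so do the three characters `)-(`
coming from a single box. -/
def LinkRel (ws : List PChar) (p q : ℕ) : Prop :=
  (∃ a b, MatchedPair ws a b ∧ a ≤ p ∧ p ≤ b ∧ a ≤ q ∧ q ≤ b) ∨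
  (∃ d, 1 ≤ d ∧ d + 1 < ws.length ∧ ws.getD d PChar.op = PChar.dash ∧
    (p = d - 1 ∨ p = d ∨ p = d + 1) ∧ (q = d - 1 ∨ q = d ∨ q = d + 1))

/-- Two positions lie in the same equivalence class of the linked `i`-word. -/
def SameClass (ws : List PChar) : ℕ → ℕ → Prop := Relation.ReflTransGen (LinkRel ws)

/-- The class of position `p` contains an unpaired `(`. -/
def HasUnpairedOpIn (ws : List PChar) (p : ℕ) : Prop :=
  ∃ q, SameClass ws p q ∧ UnpairedOp ws q

/-- The class of position `p` contains an unpaired `)`. -/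
def HasUnpairedClIn (ws : List PChar) (p : ℕ) : Prop :=
  ∃ q, SameClass ws p q ∧ UnpairedCl ws q

/-- Position `p` belongs to a left form: a class with no unpaired `)` that ends
with an unpaired `(`. -/
def IsLeftFormAt (ws : List PChar) (p : ℕ) : Prop :=
  p < ws.length ∧ HasUnpairedOpIn ws p ∧ ¬ HasUnpairedClIn ws p

/-- Position `p` belongs to a right form: a class with no unpaired `(` that starts
with an unpaired `)`. -/
def IsRightFormAt (ws : List PChar) (p : ℕ) : Prop :=
  p < ws.length ∧ HasUnpairedClIn ws p ∧ ¬ HasUnpairedOpIn ws p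

/-- The square-root raising operator `e'_i` on set-valued decomposition tableaux. -/
noncomputable def eSqrt (lam : List ℕ) (i : ℕ) (T : ℕ × ℕ → Finset ℕ) :
    Option (ℕ × ℕ → Finset ℕ) :=
  let tk := tokens lam i T
  let ws := tk.map Prod.fst
  if hc : ∃ p, UnpairedOp ws p ∧ HasUnpairedClIn ws p then
    -- the `)-(` at the end of the combined form: remove `i+1` from its box
    let b := (tk.getD (Nat.find hc) (PChar.op, (0, 0))).2
    some (Function.update T b ((T b).erase (i + 1)))
  else if hl : ∃ p, IsLeftFormAt ws p then
    -- the `(` at the start of the first left form: add `i` to its box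
    let b := (tk.getD (Nat.find hl) (PChar.op, (0, 0))).2
    some (Function.update T b (insert i (T b)))
  else none

/-- The square-root lowering operator `f'_i` on set-valued decomposition tableaux. -/
noncomputable def fSqrt (lam : List ℕ) (i : ℕ) (T : ℕ × ℕ → Finset ℕ) :
    Option (ℕ × ℕ → Finset ℕ) :=
  let tk := tokens lam i T
  let ws := tk.map Prod.fst
  if hc : ∃ p, UnpairedCl ws p ∧ HasUnpairedOpIn ws p then
    -- the `)-(` at the beginning of the combined form: remove `i` from its box
    let b := (tk.getD (Nat.find hc) (PChar.op, (0, 0))).2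
    some (Function.update T b ((T b).erase i))
  else if _hr : ∃ p, IsRightFormAt ws p then
    -- the `)` at the end of the last right form: add `i+1` to its box
    let b := (tk.getD (Nat.findGreatest (fun p => IsRightFormAt ws p) ws.length)
        (PChar.op, (0, 0))).2
    some (Function.update T b (insert (i + 1) (T b)))
  else none

/-- The square-root queer raising operator `e'_1̄`. -/
noncomputable def eBarSqrt (lam : List ℕ) (T : ℕ × ℕ → Finset ℕ) :
    Option (ℕ × ℕ → Finset ℕ) :=
  if h : ∃ m, m < (revrowBoxes lam).length ∧
      (1 ∈ T ((revrowBoxes lam).getD m (0, 0)) ∨ 2 ∈ T ((revrowBoxes lam).getD m (0, 0))) then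
    let b := (revrowBoxes lam).getD (Nat.find h) (0, 0)
    if 1 ∈ T b then
      if 2 ∈ T b then some (Function.update T b ((T b).erase 2)) else none
    else some (Function.update T b (insert 1 (T b)))
  else none

/-- The square-root queer lowering operator `f'_1̄`. -/
noncomputable def fBarSqrt (lam : List ℕ) (T : ℕ × ℕ → Finset ℕ) :
    Option (ℕ × ℕ → Finset ℕ) :=
  if h : ∃ m, m < (revrowBoxes lam).length ∧
      (1 ∈ T ((revrowBoxes lam).getD m (0, 0)) ∨ 2 ∈ T ((revrowBoxes lam).getD m (0, 0))) then
    let b := (revrowBoxes lam).getD (Nat.find h) (0, 0)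
    if 2 ∈ T b then
      if 1 ∈ T b then some (Function.update T b ((T b).erase 1)) else none
    else some (Function.update T b (insert 2 (T b)))
  else none
/-! ## Abstract √gl_n- and √q_n-crystals -/

/-- The data of a crystal-like structure: a weight map (coordinates `1, …, n` are the
relevant ones) and partial raising/lowering operators indexed by `i ∈ [n-1]`. -/
structure SqGlData (B : Type*) where
  wt : B → ℕ → ℕ
  e : ℕ → B → Option B
  f : ℕ → B → Option B

/-- The axioms of a `√gl_n`-crystal. -/
def IsSqGlCrystal {B : Type*} (n : ℕ) (D : SqGlData B) : Prop :=
  (∀ i, 1 ≤ i → i < n → ∀ b, ∃ ep ph : ℕ,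
      HasStringLen (D.e i) b ep ∧ HasStringLen (D.f i) b ph ∧
      Even (ep + ph) ∧ (ph : ℤ) - ep = 2 * ((D.wt b i : ℤ) - D.wt b (i + 1))) ∧
  (∀ i, 1 ≤ i → i < n → ∀ b c, D.e i b = some c ↔ D.f i c = some b) ∧
  (∀ i, 1 ≤ i → i < n → ∀ b c, D.e i b = some c → ∀ ep, HasStringLen (D.e i) b ep →
      ∀ k, (D.wt c k : ℤ) - D.wt b k =
        if Even ep then (if k = i then 1 else 0) else (if k = i + 1 then -1 else 0))

/-- The data of a queer crystal-like structure. -/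
structure SqQData (B : Type*) extends SqGlData B where
  ebar : B → Option B
  fbar : B → Option B

/-- The axioms of a `√q_n`-crystal. -/
def IsSqQnCrystal {B : Type*} (n : ℕ) (D : SqQData B) : Prop :=
  IsSqGlCrystal n D.toSqGlData ∧
  (∀ i, 3 ≤ i → i < n → ∀ b,
      (D.e i b).bind D.ebar = (D.ebar b).bind (D.e i) ∧
      (D.f i b).bind D.ebar = (D.ebar b).bind (D.f i) ∧
      (D.e i b).bind D.fbar = (D.fbar b).bind (D.e i) ∧
      (D.f i b).bind D.fbar = (D.fbar b).bind (D.f i)) ∧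
  (∀ i, 3 ≤ i → i < n → ∀ b c, (D.ebar b = some c ∨ D.fbar b = some c) →
      (∀ m, HasStringLen (D.e i) b m ↔ HasStringLen (D.e i) c m) ∧
      (∀ m, HasStringLen (D.f i) b m ↔ HasStringLen (D.f i) c m)) ∧
  (∀ b, ∃ ep ph : ℕ, HasStringLen D.ebar b ep ∧ HasStringLen D.fbar b ph ∧
      ep + ph = (if D.wt b 1 = 0 ∧ D.wt b 2 = 0 then 0 else 2)) ∧
  (∀ b c, D.ebar b = some c ↔ D.fbar c = some b) ∧
  (∀ b c, D.ebar b = some c → ∀ ep, HasStringLen D.ebar b ep →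
      ∀ k, (D.wt c k : ℤ) - D.wt b k =
        if ep = 2 then (if k = 1 then 1 else 0) else (if k = 2 then -1 else 0))

/-- The square of a partial operator. -/
def sqOp {B : Type*} (g : B → Option B) : B → Option B := fun b => (g b).bind g

/-- The axioms of a (seminormal) `gl_n`-crystal for given weight map and operators. -/
def GlSeminormalAxioms {B : Type*} (n : ℕ) (wt : B → ℕ → ℕ)
    (E F : ℕ → B → Option B) : Prop :=
  (∀ i, 1 ≤ i → i < n → ∀ b c, E i b = some c ↔ F i c = some b) ∧
  (∀ i, 1 ≤ i → i < n → ∀ b c, E i b = some c →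
      ∀ k, (wt c k : ℤ) - wt b k = (if k = i then 1 else 0) - (if k = i + 1 then 1 else 0)) ∧
  (∀ i, 1 ≤ i → i < n → ∀ b, ∃ ep ph : ℕ,
      HasStringLen (E i) b ep ∧ HasStringLen (F i) b ph ∧
      (ph : ℤ) - ep = (wt b i : ℤ) - wt b (i + 1))

/-- The additional axioms making a `gl_n`-crystal into a `q_n`-crystal. -/
def QnExtraAxioms {B : Type*} (n : ℕ) (wt : B → ℕ → ℕ)
    (E F : ℕ → B → Option B) (Eb Fb : B → Option B) : Prop :=
  (∀ i, 3 ≤ i → i < n → ∀ b,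
      (E i b).bind Eb = (Eb b).bind (E i) ∧ (F i b).bind Eb = (Eb b).bind (F i) ∧
      (E i b).bind Fb = (Fb b).bind (E i) ∧ (F i b).bind Fb = (Fb b).bind (F i)) ∧
  (∀ i, 3 ≤ i → i < n → ∀ b c, (Eb b = some c ∨ Fb b = some c) →
      (∀ m, HasStringLen (E i) b m ↔ HasStringLen (E i) c m) ∧
      (∀ m, HasStringLen (F i) b m ↔ HasStringLen (F i) c m)) ∧
  (∀ b c, Eb b = some c ↔ Fb c = some b) ∧
  (∀ b c, Eb b = some c →
      ∀ k, (wt c k : ℤ) - wt b k = (if k = 1 then 1 else 0) - (if k = 2 then 1 else 0))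

/-- String length as a function (the supremum of the set of iterates that survive). -/
noncomputable def strLen {B : Type*} (g : B → Option B) (b : B) : ℕ :=
  sSup {k | iterOpt g k b ≠ none}

/-- Tensor product of `√gl_n`-crystal data. -/
noncomputable def tensorGl {B C : Type*} (DB : SqGlData B) (DC : SqGlData C) :
    SqGlData (B × C) where
  wt := fun bc k => DB.wt bc.1 k + DC.wt bc.2 k
  e := fun i bc =>
    if strLen (DB.e i) bc.1 ≤ strLen (DC.f i) bc.2 then
      (DC.e i bc.2).map fun c' => (bc.1, c')
    else (DB.e i bc.1).map fun b' => (b', bc.2)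
  f := fun i bc =>
    if strLen (DB.e i) bc.1 < strLen (DC.f i) bc.2 then
      (DC.f i bc.2).map fun c' => (bc.1, c')
    else (DB.f i bc.1).map fun b' => (b', bc.2)

/-- Tensor product of `√q_n`-crystal data. -/
noncomputable def tensorQ {B C : Type*} (DB : SqQData B) (DC : SqQData C) :
    SqQData (B × C) where
  toSqGlData := tensorGl DB.toSqGlData DC.toSqGlData
  ebar := fun bc =>
    if DB.wt bc.1 1 = 0 ∧ DB.wt bc.1 2 = 0 then (DC.ebar bc.2).map fun c' => (bc.1, c')
    else (DB.ebar bc.1).map fun b' => (b', bc.2)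
  fbar := fun bc =>
    if DB.wt bc.1 1 = 0 ∧ DB.wt bc.1 2 = 0 then (DC.fbar bc.2).map fun c' => (bc.1, c')
    else (DB.fbar bc.1).map fun b' => (b', bc.2)
/-! ## Generating functions -/

/-- A set-valued decomposition tableau, normalized to be empty off the shifted diagram. -/
def IsNormalizedSVDT (lam : List ℕ) (T : ℕ × ℕ → Finset ℕ) : Prop :=
  IsSetDecompTab lam T ∧ ∀ i j, ¬ InSD lam i j → T (i, j) = ∅

/-- A decomposition tableau, normalized to be `0` off the shifted diagram. -/
def IsNormalizedDT (lam : List ℕ) (T : ℕ × ℕ → ℕ) : Prop :=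
  IsDecompTab lam T ∧ ∀ i j, ¬ InSD lam i j → T (i, j) = 0

/-- `Σ_λ = ∑_{T ∈ SetDecTab(λ)} x^T` as a formal power series; variable `k` stands for
`x_{k+1}`, i.e. records occurrences of the letter `k+1`. -/
noncomputable def SigmaLam (lam : List ℕ) : MvPowerSeries ℕ ℤ :=
  fun d => (Set.ncard
    {T : ℕ × ℕ → Finset ℕ | IsNormalizedSVDT lam T ∧ ∀ k, wtSet lam T (k + 1) = d k} : ℤ)

/-- The Schur `P`-function `P_λ = ∑_{T ∈ DecTab(λ)} x^T` as a formal power series. -/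
noncomputable def SchurPfun (lam : List ℕ) : MvPowerSeries ℕ ℤ :=
  fun d => (Set.ncard
    {T : ℕ × ℕ → ℕ | IsNormalizedDT lam T ∧ ∀ k, wtNum lam T (k + 1) = d k} : ℤ)

/-! ## Marked (primed) shifted tableaux and `GP`-functions.
We encode the marked alphabet `1' < 1 < 2' < 2 < ⋯` into `ℕ` by `k' ↦ 2k - 1` and
`k ↦ 2k`, so primed letters are odd and the natural order is preserved. -/

/-- A semistandard marked shifted tableau (as a distribution): weakly increasing rows and
columns, no primed (odd) letter repeated in a row, no unprimed (even) letter repeated in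
a column. -/
def IsSemistandardMarked (lam : List ℕ) (d : ℕ × ℕ → ℕ) : Prop :=
  (∀ i j, InSD lam i j → InSD lam i (j + 1) → d (i, j) ≤ d (i, j + 1)) ∧
  (∀ i j, InSD lam i j → InSD lam (i + 1) j → d (i, j) ≤ d (i + 1, j)) ∧
  (∀ i j j', InSD lam i j → InSD lam i j' → j < j' → d (i, j) = d (i, j') →
    Even (d (i, j))) ∧
  (∀ i i' j, InSD lam i j → InSD lam i' j → i < i' → d (i, j) = d (i', j) →
    Odd (d (i, j)))

/-- A semistandard set-valued shifted tableau in the marked alphabet, with no primed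
letters on the main diagonal. -/
def IsSetSSMarkedShifted (lam : List ℕ) (T : ℕ × ℕ → Finset ℕ) : Prop :=
  (∀ i j, InSD lam i j → (T (i, j)).Nonempty ∧ ∀ v ∈ T (i, j), 1 ≤ v) ∧
  (∀ i, InSD lam i i → ∀ v ∈ T (i, i), Even v) ∧
  (∀ d : ℕ × ℕ → ℕ, (∀ i j, InSD lam i j → d (i, j) ∈ T (i, j)) →
    IsSemistandardMarked lam d)

/-- `wtMarked lam T k` is the total number of occurrences of `k` or `k'` in `T`. -/
noncomputable def wtMarked (lam : List ℕ) (T : ℕ × ℕ → Finset ℕ) (k : ℕ) : ℕ :=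
  ((revrowBoxes lam).map fun b =>
    ((T b).filter fun v => v = 2 * k - 1 ∨ v = 2 * k).card).sum

/-- The K-theoretic Schur `P`-function `GP_λ` as a formal power series; variable `k`
stands for `x_{k+1}`. -/
noncomputable def GPfun (lam : List ℕ) : MvPowerSeries ℕ ℤ :=
  fun d => (Set.ncard
    {T : ℕ × ℕ → Finset ℕ | IsSetSSMarkedShifted lam T ∧
      (∀ i j, ¬ InSD lam i j → T (i, j) = ∅) ∧
      ∀ k, wtMarked lam T (k + 1) = d k} : ℤ)

/-! ## Polynomial versions (variables `x_1, …, x_n`, i.e. `X 1, …, X n`) -/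

/-- The boxes of the (unshifted) Young diagram of `lam`, listed row by row. -/
def YDboxes (lam : List ℕ) : List (ℕ × ℕ) :=
  (List.range lam.length).flatMap fun r =>
    (List.range (lam.getD r 0)).map fun j => (r + 1, j + 1)

/-- A semistandard (unshifted) Young tableau: rows weakly increase, columns strictly
increase. -/
def IsSemistandardYT (lam : List ℕ) (d : ℕ × ℕ → ℕ) : Prop :=
  (∀ i j, InYD lam i j → InYD lam i (j + 1) → d (i, j) ≤ d (i, j + 1)) ∧
  (∀ i j, InYD lam i j → InYD lam (i + 1) j → d (i, j) < d (i + 1, j))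

/-- A semistandard set-valued (unshifted) tableau with entries in `{1, …, n}`,
normalized off the diagram. -/
def IsSetSSYT (n : ℕ) (lam : List ℕ) (T : ℕ × ℕ → Finset ℕ) : Prop :=
  (∀ i j, InYD lam i j → (T (i, j)).Nonempty ∧ ∀ v ∈ T (i, j), 1 ≤ v ∧ v ≤ n) ∧
  (∀ i j, ¬ InYD lam i j → T (i, j) = ∅) ∧
  (∀ d : ℕ × ℕ → ℕ, (∀ i j, InYD lam i j → d (i, j) ∈ T (i, j)) → IsSemistandardYT lam d)

/-- The symmetric Grothendieck polynomial `G_λ(x_1, …, x_n)`. -/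
noncomputable def Gpoly (n : ℕ) (lam : List ℕ) : MvPolynomial ℕ ℤ :=
  ∑ᶠ T ∈ {T : ℕ × ℕ → Finset ℕ | IsSetSSYT n lam T},
    ((YDboxes lam).map fun b =>
      ∏ v ∈ T b, (MvPolynomial.X v : MvPolynomial ℕ ℤ)).prod

/-- A semistandard set-valued marked shifted tableau with letters at most `n`,
normalized off the diagram. -/
def IsSetSSMarkedShiftedN (n : ℕ) (lam : List ℕ) (T : ℕ × ℕ → Finset ℕ) : Prop :=
  IsSetSSMarkedShifted lam T ∧ (∀ i j, ¬ InSD lam i j → T (i, j) = ∅) ∧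
  ∀ i j, InSD lam i j → ∀ v ∈ T (i, j), v ≤ 2 * n

/-- The K-theoretic Schur `P`-polynomial `GP_λ(x_1, …, x_n)`. -/
noncomputable def GPpoly (n : ℕ) (lam : List ℕ) : MvPolynomial ℕ ℤ :=
  ∑ᶠ T ∈ {T : ℕ × ℕ → Finset ℕ | IsSetSSMarkedShiftedN n lam T},
    ((revrowBoxes lam).map fun b =>
      ∏ v ∈ T b, (MvPolynomial.X ((v + 1) / 2) : MvPolynomial ℕ ℤ)).prod

/-- The character of the `m`-th tensor power of the standard `√q_n`-crystal, whose
elements are the nonempty subsets of `{1, …, n}` with weight the indicator vector. -/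
noncomputable def standardChar (n m : ℕ) : MvPolynomial ℕ ℤ :=
  ∑ b : Fin m → {S : Finset (Fin n) // S.Nonempty},
    ∏ j : Fin m, ∏ k ∈ (b j).1, (MvPolynomial.X ((k : ℕ) + 1) : MvPolynomial ℕ ℤ)

/-! The first letter `a ∈ {1, 2}` of `revrow(T)` that `e*_1̄` / `f*_1̄` changes is preceded in the
reading word only by letters `≥ 3`: these fill the boxes read earlier (the rows above and the boxes
to its right) and the larger entries of its own box, whose remaining entries are all `1`. Hence
swapping it between `1` and `2` does not move it in the reading word, and the other operator swaps
it back.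

Every distribution of the new tableau is a distribution of `T` with the entry of that box replaced
by the other letter of `{1, 2}`. In a hook word a letter `x ∈ {1, 2}` followed only by letters `≥ 3`
can be changed to the other one: the valley of the hook is forced to lie at `x` or just before it,
so whether the word is a hook word does not depend on which of `1`, `2` sits there. The same replacement matches the hook
subwords of two consecutive rows length for length, so maximal hook subwords stay maximal. -/

section GetD

variable {α : Type*} {u v : List α} {x d : α}

theorem getD_append_cons_of_lt {j : ℕ} (hj : j < u.length) :
    (u ++ x :: v).getD j d = u.getD j d :=
  List.getD_append _ _ _ _ hj

theorem getD_append_cons_length : (u ++ x :: v).getD u.length d = x := by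
  simp

theorem getD_append_cons_add (k : ℕ) : (u ++ x :: v).getD (u.length + 1 + k) d = v.getD k d := by
  rw [List.getD_append_right _ _ _ _ (by omega), show u.length + 1 + k - u.length = k + 1 by omega]
  simp

end GetD

theorem isChain_iff_getD {R : ℕ → ℕ → Prop} {l : List ℕ} :
    l.IsChain R ↔ ∀ j, j + 1 < l.length → R (l.getD j 0) (l.getD (j + 1) 0) := by
  rw [List.isChain_iff_getElem]
  refine forall_congr' fun j => ⟨fun h hj => ?_, fun h hj => ?_⟩
  · rw [List.getD_eq_getElem _ _ (by omega), List.getD_eq_getElem _ _ hj]; exact h hj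
  · have := h hj
    rwa [List.getD_eq_getElem _ _ (by omega), List.getD_eq_getElem _ _ hj] at this

section HookWord

variable {u v : List ℕ} {x y : ℕ}

theorem IsHookWord.isChain_of_append_cons (h : IsHookWord (u ++ x :: v)) (hx : x ≤ 2)
    (hv : ∀ z ∈ v, 3 ≤ z) : (∀ z ∈ u, 0 < z) ∧ u.IsChain (· ≥ ·) ∧ v.IsChain (· < ·) := by
  obtain ⟨hpos, m, hm₁, hm₂, hdec, hinc⟩ := h
  have hlen : (u ++ x :: v).length = u.length + 1 + v.length := by simp; omega
  have hpos' : ∀ j, j < u.length → 0 < u.getD j 0 := fun j hj => by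
    rw [List.getD_eq_getElem _ _ hj]; exact hpos _ (List.mem_append_left _ (List.getElem_mem hj))
  have hm_le : m ≤ u.length + 1 := by
    by_contra hc
    have h₁ := hdec u.length (by omega)
    rw [getD_append_cons_length, ← add_zero (u.length + 1), getD_append_cons_add,
      List.getD_eq_getElem _ _ (by omega)] at h₁
    have := hv _ (List.getElem_mem (show 0 < v.length by omega))
    omega
  -- a strict ascent of positive letters ending at `x ≤ 2` has at most two letters
  have hm_ge : u.length ≤ m := by
    by_contra hc
    have h₁ := hinc (u.length - 1) (by omega) (by omega)
    have h₂ := hinc (u.length - 2) (by omega) (by omega)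
    rw [show u.length - 1 + 1 = u.length by omega, getD_append_cons_length,
      getD_append_cons_of_lt (by omega)] at h₁
    rw [show u.length - 2 + 1 = u.length - 1 by omega, getD_append_cons_of_lt (by omega),
      getD_append_cons_of_lt (by omega)] at h₂
    have := hpos' (u.length - 2) (by omega)
    omega
  rw [isChain_iff_getD, isChain_iff_getD]
  refine ⟨fun z hz => hpos z (List.mem_append_left _ hz), fun j hj => ?_, fun j hj => ?_⟩
  · have := hdec j (by omega)
    rwa [getD_append_cons_of_lt hj, getD_append_cons_of_lt (by omega)] at this
  · have := hinc (u.length + 1 + j) (by omega) (by omega)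
    rwa [getD_append_cons_add, add_assoc, getD_append_cons_add] at this

theorem isHookWord_append_cons (hx : 1 ≤ x ∧ x ≤ 2) (hv : ∀ z ∈ v, 3 ≤ z) (hpos : ∀ z ∈ u, 0 < z)
    (hdec : u.IsChain (· ≥ ·)) (hinc : v.IsChain (· < ·)) : IsHookWord (u ++ x :: v) := by
  rw [isChain_iff_getD] at hdec hinc
  have hlen : (u ++ x :: v).length = u.length + 1 + v.length := by simp; omega
  refine ⟨fun z hz => ?_, ?_⟩
  · rcases List.mem_append.1 hz with hz | hz
    · exact hpos z hz
    · rcases List.mem_cons.1 hz with rfl | hz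
      exacts [by omega, by linarith [hv z hz]]
  have hinc' : ∀ j, u.length ≤ j → j + 1 < (u ++ x :: v).length →
      (u ++ x :: v).getD j 0 < (u ++ x :: v).getD (j + 1) 0 := fun j hj₁ hj₂ => by
    obtain ⟨k, rfl⟩ := Nat.exists_eq_add_of_le hj₁
    rcases k with _ | k
    · rw [add_zero, getD_append_cons_length, ← add_zero (u.length + 1), getD_append_cons_add,
        List.getD_eq_getElem _ _ (by omega)]
      have := hv _ (List.getElem_mem (show 0 < v.length by omega))
      omega
    · rw [show u.length + (k + 1) = u.length + 1 + k by omega, getD_append_cons_add, add_assoc,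
        getD_append_cons_add]
      exact hinc k (by omega)
  by_cases hval : u.length = 0 ∨ x ≤ u.getD (u.length - 1) 0
  · refine ⟨u.length + 1, by omega, by omega, fun j hj => ?_,
      fun j hj₁ hj₂ => hinc' j (by omega) hj₂⟩
    rcases Nat.lt_or_ge (j + 1) u.length with hj' | hj'
    · rw [getD_append_cons_of_lt hj', getD_append_cons_of_lt (by omega)]
      exact hdec j hj'
    · rw [show j + 1 = u.length by omega, getD_append_cons_length,
        getD_append_cons_of_lt (by omega), show j = u.length - 1 by omega]
      omega
  · refine ⟨u.length, by omega, by omega, fun j hj => ?_, fun j hj₁ hj₂ => ?_⟩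
    · rw [getD_append_cons_of_lt hj, getD_append_cons_of_lt (by omega)]
      exact hdec j hj
    · rcases Nat.lt_or_ge j u.length with hj' | hj'
      · rw [show j + 1 = u.length by omega, getD_append_cons_length,
          getD_append_cons_of_lt hj', show j = u.length - 1 by omega]
        omega
      · exact hinc' j hj' hj₂

theorem isHookWord_append_cons_iff (hx : 1 ≤ x ∧ x ≤ 2) (hv : ∀ z ∈ v, 3 ≤ z) :
    IsHookWord (u ++ x :: v) ↔ (∀ z ∈ u, 0 < z) ∧ u.IsChain (· ≥ ·) ∧ v.IsChain (· < ·) :=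
  ⟨fun h => h.isChain_of_append_cons hx.2 hv,
    fun ⟨hpos, hdec, hinc⟩ => isHookWord_append_cons hx hv hpos hdec hinc⟩

theorem IsHookWord.replace_small (h : IsHookWord (u ++ x :: v)) (hv : ∀ z ∈ v, 3 ≤ z)
    (hx : 1 ≤ x ∧ x ≤ 2) (hy : 1 ≤ y ∧ y ≤ 2) : IsHookWord (u ++ y :: v) :=
  (isHookWord_append_cons_iff hy hv).2 ((isHookWord_append_cons_iff hx hv).1 h)

theorem exists_hook_sublist_replace_small {t : List ℕ} (hv : ∀ z ∈ v, 3 ≤ z)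
    (hx : 1 ≤ x ∧ x ≤ 2) (hy : 1 ≤ y ∧ y ≤ 2) (hsub : t.Sublist (u ++ y :: v))
    (ht : IsHookWord t) :
    ∃ t', t'.Sublist (u ++ x :: v) ∧ IsHookWord t' ∧ t'.length = t.length := by
  obtain ⟨t₁, t₂, rfl, h₁, h₂⟩ := List.sublist_append_iff.1 hsub
  rcases List.sublist_cons_iff.1 h₂ with h₂ | ⟨r, rfl, hr⟩
  · exact ⟨t₁ ++ t₂, h₁.append (h₂.trans (List.sublist_cons_self x v)), ht, rfl⟩
  · exact ⟨t₁ ++ x :: r, h₁.append (hr.cons_cons x),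
      ht.replace_small (fun z hz => hv z (hr.subset hz)) hy hx, by simp⟩

theorem IsMaxHookSubwordIn.replace_small {r r' : List ℕ}
    (h : IsMaxHookSubwordIn r (u ++ x :: v)) (hv : ∀ z ∈ v, 3 ≤ z) (hx : 1 ≤ x ∧ x ≤ 2)
    (hy : 1 ≤ y ∧ y ≤ 2) (hsub : r'.Sublist (u ++ y :: v)) (hr' : IsHookWord r')
    (hlen : r.length ≤ r'.length) : IsMaxHookSubwordIn r' (u ++ y :: v) := by
  refine ⟨hsub, hr', fun t ht hhook => ?_⟩
  obtain ⟨t', ht', hhook', hlen'⟩ := exists_hook_sublist_replace_small hv hx hy ht hhook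
  exact hlen' ▸ (h.2.2 t' ht' hhook').trans hlen

end HookWord
section RowWord

variable {lam : List ℕ} {d : ℕ × ℕ → ℕ}

theorem rowWord_length (i : ℕ) : (rowWord lam d i).length = lam.getD (i - 1) 0 := by
  simp [rowWord]

theorem rowWord_update_of_ne {b : ℕ × ℕ} {z i : ℕ} (hi : i ≠ b.1) :
    rowWord lam (Function.update d b z) i = rowWord lam d i :=
  List.map_congr_left fun j _ => Function.update_of_ne (fun h => hi (by rw [← h])) z d

theorem rowWord_update_self {r c : ℕ} (y : ℕ) (hrc : r ≤ c) :
    rowWord lam (Function.update d (r, c) y) r = (rowWord lam d r).set (c - r) y := by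
  refine List.ext_getElem (by simp [rowWord]) fun j h₁ h₂ => ?_
  simp only [rowWord, List.getElem_map, List.getElem_range, List.getElem_set, Function.update_apply,
    Prod.mk.injEq, true_and]
  by_cases hj : c - r = j
  · simp [hj, show r + j = c by omega]
  · simp [hj, show r + j ≠ c by omega]

theorem rowWord_eq_take_append_cons {r c : ℕ} (hrc : r ≤ c) (hc : c < r + lam.getD (r - 1) 0) :
    rowWord lam d r =
      (rowWord lam d r).take (c - r) ++ d (r, c) :: (rowWord lam d r).drop (c - r + 1) := by
  have hlt : c - r < (rowWord lam d r).length := by rw [rowWord_length]; omega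
  conv_lhs => rw [← List.take_append_drop (c - r) (rowWord lam d r), List.drop_eq_getElem_cons hlt]
  simp [rowWord, show r + (c - r) = c by omega]

theorem exists_rowWord_eq_append_cons {r c : ℕ} (hrc : InSD lam r c) (y : ℕ) :
    ∃ u v, rowWord lam d r = u ++ d (r, c) :: v ∧
      rowWord lam (Function.update d (r, c) y) r = u ++ y :: v ∧
      ∀ z ∈ v, ∃ j, InSD lam r j ∧ c < j ∧ d (r, j) = z := by
  obtain ⟨hr₁, hr₂, hrc₁, hrc₂⟩ := hrc
  refine ⟨_, _, rowWord_eq_take_append_cons hrc₁ hrc₂, ?_, fun z hz => ?_⟩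
  · rw [rowWord_update_self y hrc₁, List.set_eq_take_cons_drop]
    rw [rowWord_length]; omega
  · obtain ⟨k, hk, rfl⟩ := List.getElem_of_mem hz
    simp only [List.length_drop, rowWord_length] at hk
    exact ⟨r + (c - r + 1 + k), ⟨hr₁, hr₂, by omega, by omega⟩, by omega, by simp [rowWord]⟩

end RowWord

def ReadsBefore (b b' : ℕ × ℕ) : Prop := b.1 < b'.1 ∨ b.1 = b'.1 ∧ b'.2 < b.2

theorem IsDecompTab.update_small {lam : List ℕ} {d : ℕ × ℕ → ℕ} (hd : IsDecompTab lam d)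
    {r c y : ℕ} (hrc : InSD lam r c) (hx : 1 ≤ d (r, c) ∧ d (r, c) ≤ 2) (hy : 1 ≤ y ∧ y ≤ 2)
    (hbefore : ∀ i j, InSD lam i j → ReadsBefore (i, j) (r, c) → 3 ≤ d (i, j)) :
    IsDecompTab lam (Function.update d (r, c) y) := by
  obtain ⟨hrows, hpairs⟩ := hd
  obtain ⟨u, v, hrow, hrow', hv⟩ := exists_rowWord_eq_append_cons hrc y
  replace hv : ∀ z ∈ v, 3 ≤ z := fun z hz => by
    obtain ⟨j, hj, hcj, rfl⟩ := hv z hz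
    exact hbefore r j hj (Or.inr ⟨rfl, hcj⟩)
  have habove : ∀ i, 1 ≤ i → i < r → ∀ z ∈ rowWord lam d i, 3 ≤ z := by
    intro i hi₁ hi₂ z hz
    obtain ⟨j, hj, rfl⟩ := List.mem_map.1 hz
    exact hbefore i _ ⟨hi₁, by have := hrc.2.1; omega, by omega,
      by have := List.mem_range.1 hj; omega⟩ (Or.inl hi₂)
  refine ⟨fun i hi₁ hi₂ => ?_, fun i hi₁ hi₂ => ?_⟩
  · rcases eq_or_ne i r with rfl | hir
    · rw [hrow']
      exact (hrow ▸ hrows i hi₁ hi₂).replace_small hv hx hy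
    · rw [rowWord_update_of_ne hir]
      exact hrows i hi₁ hi₂
  · rcases eq_or_ne i r with rfl | hir
    · have h := hpairs i hi₁ hi₂
      rw [hrow, ← List.append_assoc] at h
      rw [hrow', rowWord_update_of_ne (by simp), ← List.append_assoc]
      refine h.replace_small hv hx hy (by simp) ?_ (by simp)
      exact (hrow ▸ hrows i hi₁ (by omega)).replace_small hv hx hy
    rcases eq_or_ne (i + 1) r with rfl | hir'
    · have h := hpairs i hi₁ hi₂
      have hv' : ∀ z ∈ v ++ rowWord lam d i, 3 ≤ z := fun z hz =>
        (List.mem_append.1 hz).elim (hv z) (habove i hi₁ (by omega) z)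
      rw [hrow, List.append_assoc, List.cons_append] at h
      rw [rowWord_update_of_ne hir, hrow', List.append_assoc, List.cons_append]
      refine h.replace_small hv' hx hy ?_ (hrows i hi₁ (by omega)) le_rfl
      exact ((List.sublist_append_right v _).cons y).trans (List.sublist_append_right u _)
    · rw [rowWord_update_of_ne hir, rowWord_update_of_ne hir']
      exact hpairs i hi₁ hi₂

theorem exists_split_of_flatMap_eq_append_cons {α β : Type*} {f : β → List α} {b : β} {a : α}
    {L : List β} {Q R : List (β × α)}
    (h : L.flatMap (fun c => (f c).map fun v => (c, v)) = Q ++ (b, a) :: R) :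
    ∃ L₁ L₂ s₁ s₂, L = L₁ ++ b :: L₂ ∧ f b = s₁ ++ a :: s₂ ∧
      Q = L₁.flatMap (fun c => (f c).map fun v => (c, v)) ++ s₁.map (fun v => (b, v)) ∧
      R = s₂.map (fun v => (b, v)) ++ L₂.flatMap (fun c => (f c).map fun v => (c, v)) := by
  induction L generalizing Q with
  | nil => simp at h
  | cons c L ih =>
    rw [List.flatMap_cons] at h
    rcases List.append_eq_append_iff.1 h with ⟨Q', rfl, hQ'⟩ | ⟨Q', hQ', hR⟩
    · obtain ⟨L₁, L₂, s₁, s₂, rfl, hs, hQ, hR⟩ := ih hQ'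
      exact ⟨c :: L₁, L₂, s₁, s₂, rfl, hs, by simp [hQ], hR⟩
    rcases Q' with _ | ⟨e, Q'⟩
    · obtain ⟨L₁, L₂, s₁, s₂, rfl, hs, hQ, hR⟩ := ih (Q := []) hR.symm
      exact ⟨c :: L₁, L₂, s₁, s₂, rfl, hs, by simp [← hQ, hQ'], hR⟩
    obtain ⟨rfl, rfl⟩ := List.cons_eq_cons.1 hR
    obtain ⟨s₁, s', hs, rfl, hs'⟩ := List.map_eq_append_iff.1 hQ'
    obtain ⟨a', s₂, rfl, hca, rfl⟩ := List.map_eq_cons_iff.1 hs'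
    obtain ⟨rfl, rfl⟩ := Prod.mk.inj hca
    exact ⟨[], L, s₁, s₂, rfl, hs, by simp, rfl⟩

section FirstLetter

variable {β : Type*} {E : List (β × ℕ)}

theorem exists_eq_append_cons_at_find {a a' : ℕ} (ha : a = 1 ∧ a' = 2 ∨ a = 2 ∧ a' = 1)
    (hpos : ∀ e ∈ E, e.2 ≠ 0)
    (h : ∃ p, p < (E.map Prod.snd).length ∧ (E.map Prod.snd).getD p 0 = a ∧
      ∀ q < p, (E.map Prod.snd).getD q 0 ≠ a') {o : β × ℕ} {b : β}
    (hb : b = (E.getD (Nat.find h) o).1) :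
    ∃ Q R, E = Q ++ (b, a) :: R ∧ ∀ e ∈ Q, 3 ≤ e.2 := by
  obtain ⟨hp', hpa, hbefore⟩ := Nat.find_spec h
  have hmin : ∀ q < Nat.find h, (E.map Prod.snd).getD q 0 ≠ a := fun q hq hqa =>
    Nat.find_min h hq ⟨by omega, hqa, fun q' hq' => hbefore q' (by omega)⟩
  subst hb
  generalize Nat.find h = p at hp' hpa hbefore hmin ⊢
  have hp : p < E.length := by simpa using hp'
  have hget : ∀ q (hq : q < E.length), (E.map Prod.snd).getD q 0 = E[q].2 := fun q hq => by
    rw [List.getD_eq_getElem _ _ (by simpa using hq), List.getElem_map]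
  refine ⟨E.take p, E.drop (p + 1), ?_, fun e he => ?_⟩
  · rw [List.getD_eq_getElem _ _ hp, ← hpa, hget _ hp]
    exact (List.take_append_drop _ _).symm.trans (by rw [List.drop_eq_getElem_cons hp])
  · obtain ⟨q, hq, rfl⟩ := List.getElem_of_mem he
    rw [List.length_take] at hq
    have hne := hmin q (by omega)
    have hne' := hbefore q (by omega)
    rw [hget _ (by omega)] at hne hne'
    have := hpos _ (List.getElem_mem (show q < E.length by omega))
    simp only [List.getElem_take]
    rcases ha with ⟨rfl, rfl⟩ | ⟨rfl, rfl⟩ <;> omega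

theorem exists_find_eq_length_of_eq_append_cons {Q R : List (β × ℕ)} {c : β} {x y : ℕ}
    {w : List ℕ} (hw : w = E.map Prod.snd)
    (hE : E = Q ++ (c, x) :: R) (hQ : ∀ e ∈ Q, 3 ≤ e.2) (hx : x ≤ 2) (hy : y ≤ 2) :
    ∃ h : (∃ p, p < w.length ∧ w.getD p 0 = x ∧ ∀ q < p, w.getD q 0 ≠ y),
      Nat.find h = Q.length := by
  subst hw
  have hw : E.map Prod.snd = Q.map Prod.snd ++ x :: R.map Prod.snd := by simp [hE]
  have hlen : (Q.map Prod.snd).length = Q.length := List.length_map _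
  have hQ' : ∀ q < Q.length, 3 ≤ (E.map Prod.snd).getD q 0 := fun q hq => by
    rw [hw, getD_append_cons_of_lt (by omega), List.getD_eq_getElem _ _ (by simpa using hq)]
    simpa using hQ _ (List.getElem_mem hq)
  have hex : ∃ p, p < (E.map Prod.snd).length ∧ (E.map Prod.snd).getD p 0 = x ∧
      ∀ q < p, (E.map Prod.snd).getD q 0 ≠ y :=
    ⟨Q.length, by simp [hE], by rw [hw, ← hlen, getD_append_cons_length],
      fun q hq => by have := hQ' q hq; omega⟩
  refine ⟨hex, le_antisymm (Nat.find_min' hex ⟨by simp [hE], by rw [hw, ← hlen,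
    getD_append_cons_length], fun q hq => by have := hQ' q hq; omega⟩) ?_⟩
  by_contra hlt
  have := (Nat.find_spec hex).2.1
  have := hQ' _ (not_le.1 hlt)
  omega

end FirstLetter

def sortDesc (M : Multiset ℕ) : List ℕ := (M.sort (· ≤ ·)).reverse

theorem coe_sortDesc (M : Multiset ℕ) : (sortDesc M : Multiset ℕ) = M := by
  simp [sortDesc]

theorem mem_sortDesc {M : Multiset ℕ} {v : ℕ} : v ∈ sortDesc M ↔ v ∈ M := by
  simp [sortDesc]

theorem pairwise_sortDesc (M : Multiset ℕ) : (sortDesc M).Pairwise (· ≥ ·) := by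
  rw [sortDesc, List.pairwise_reverse]
  exact Multiset.pairwise_sort M _

theorem le_of_mem_of_sortDesc_eq {M : Multiset ℕ} {s₁ s₂ : List ℕ} {a z : ℕ}
    (hs : sortDesc M = s₁ ++ a :: s₂) (hz : z ∈ s₂) : z ≤ a := by
  have := pairwise_sortDesc M
  rw [hs, List.pairwise_append, List.pairwise_cons] at this
  exact this.2.1.1 z hz

theorem le_of_mem_of_sortDesc_eq_of_swap {M : Multiset ℕ} {s₁ s₂ : List ℕ} {a a' z : ℕ}
    (ha : a = 1 ∧ a' = 2 ∨ a = 2 ∧ a' = 1) (h0 : 0 ∉ M) (h2 : M.count 2 ≤ 1)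
    (hs : sortDesc M = s₁ ++ a :: s₂) (hz : z ∈ s₂) : z ≤ a' := by
  have hz0 : z ≠ 0 := fun hz0 => h0 (mem_sortDesc.1 (by simp [hs, ← hz0, hz]))
  have hz2 : a = 2 → z ≠ 2 := by
    rintro rfl rfl
    rw [← coe_sortDesc M, hs, Multiset.coe_count] at h2
    have := List.count_pos_iff.2 hz
    simp only [List.count_append, List.count_cons_self] at h2
    omega
  have := le_of_mem_of_sortDesc_eq hs hz
  rcases ha with ⟨rfl, rfl⟩ | ⟨rfl, rfl⟩ <;> omega

theorem not_mem_of_sortDesc_eq_of_swap {M : Multiset ℕ} {s₁ s₂ : List ℕ} {a a' : ℕ}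
    (ha : a = 1 ∧ a' = 2 ∨ a = 2 ∧ a' = 1) (hs : sortDesc M = s₁ ++ a :: s₂)
    (hs₁ : ∀ z ∈ s₁, 3 ≤ z) (ha' : a' ≠ 1) : a' ∉ M := by
  rw [← mem_sortDesc, hs]
  intro hmem
  rcases List.mem_append.1 hmem with h | h
  · have := hs₁ a' h; omega
  rcases List.mem_cons.1 h with h | h
  · rcases ha with ⟨rfl, rfl⟩ | ⟨rfl, rfl⟩ <;> omega
  · have := le_of_mem_of_sortDesc_eq hs h
    rcases ha with ⟨rfl, rfl⟩ | ⟨rfl, rfl⟩ <;> omega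

theorem sortDesc_cons_erase {M : Multiset ℕ} {s₁ s₂ : List ℕ} {a a' : ℕ}
    (h : sortDesc M = s₁ ++ a :: s₂) (h₁ : ∀ z ∈ s₁, a' ≤ z) (h₂ : ∀ z ∈ s₂, z ≤ a') :
    sortDesc (a' ::ₘ M.erase a) = s₁ ++ a' :: s₂ := by
  have hsorted := pairwise_sortDesc M
  rw [h, List.pairwise_append, List.pairwise_cons] at hsorted
  refine List.Perm.eq_of_pairwise' (pairwise_sortDesc _) ?_ ?_
  · rw [List.pairwise_append, List.pairwise_cons]
    refine ⟨hsorted.1, ⟨h₂, hsorted.2.1.2⟩, fun z hz w hw => ?_⟩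
    rcases List.mem_cons.1 hw with rfl | hw
    exacts [h₁ z hz, hsorted.2.2 z hz w (List.mem_cons_of_mem _ hw)]
  · have hmiddle : ∀ x, (↑(s₁ ++ x :: s₂) : Multiset ℕ) = x ::ₘ ↑(s₁ ++ s₂) := fun x =>
      Multiset.coe_eq_coe.2 List.perm_middle
    rw [← Multiset.coe_eq_coe, coe_sortDesc, ← coe_sortDesc M, h, hmiddle, hmiddle,
      Multiset.erase_cons_head]

theorem revrowEntriesM_eq (lam : List ℕ) (T : ℕ × ℕ → Multiset ℕ) :
    revrowEntriesM lam T =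
      (revrowBoxes lam).flatMap fun c => (sortDesc (T c)).map fun v => (c, v) :=
  rfl

section ReadingOrder

variable {lam : List ℕ}

theorem revrowBoxes_pairwise : (revrowBoxes lam).Pairwise ReadsBefore := by
  rw [revrowBoxes, List.flatMap_def, List.pairwise_flatten, List.pairwise_map]
  refine ⟨fun l hl => ?_, List.pairwise_lt_range.imp fun {r r'} hr x hx y hy => ?_⟩
  · obtain ⟨r, -, rfl⟩ := List.mem_map.1 hl
    rw [List.pairwise_map, List.pairwise_reverse]
    exact List.pairwise_lt_range.imp fun hj => Or.inr ⟨rfl, by simpa using hj⟩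
  · obtain ⟨j, -, rfl⟩ := List.mem_map.1 hx
    obtain ⟨j', -, rfl⟩ := List.mem_map.1 hy
    exact Or.inl (by simpa using hr)

theorem mem_revrowBoxes {i j : ℕ} : (i, j) ∈ revrowBoxes lam ↔ InSD lam i j := by
  simp only [revrowBoxes, InSD, List.mem_flatMap, List.mem_range, List.mem_map, List.mem_reverse,
    Prod.mk.injEq]
  constructor
  · rintro ⟨r, hr, j', hj', rfl, rfl⟩
    simp only [Nat.add_sub_cancel]
    omega
  · rintro ⟨h₁, h₂, h₃, h₄⟩
    exact ⟨i - 1, by omega, j - i, by omega, by omega, by omega⟩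

theorem mem_of_readsBefore {L₁ L₂ : List (ℕ × ℕ)} {b c : ℕ × ℕ}
    (hL : revrowBoxes lam = L₁ ++ b :: L₂) (hc : c ∈ revrowBoxes lam) (hcb : ReadsBefore c b) :
    c ∈ L₁ := by
  have hpw := revrowBoxes_pairwise (lam := lam)
  rw [hL, List.pairwise_append, List.pairwise_cons] at hpw
  rw [hL] at hc
  rcases List.mem_append.1 hc with hc | hc
  · exact hc
  rcases List.mem_cons.1 hc with rfl | hc
  · exfalso; rcases hcb with h | h <;> omega
  · exfalso; rcases hpw.2.1.1 c hc with h | h <;> rcases hcb with h' | h' <;> omega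

theorem inSD_of_revrowBoxes_eq {L₁ L₂ : List (ℕ × ℕ)} {b : ℕ × ℕ}
    (hL : revrowBoxes lam = L₁ ++ b :: L₂) : InSD lam b.1 b.2 :=
  mem_revrowBoxes.1 (hL ▸ List.mem_append_right _ List.mem_cons_self)

theorem not_mem_of_revrowBoxes_eq {L₁ L₂ : List (ℕ × ℕ)} {b : ℕ × ℕ}
    (hL : revrowBoxes lam = L₁ ++ b :: L₂) : b ∉ L₁ ∧ b ∉ L₂ := by
  have hpw := revrowBoxes_pairwise (lam := lam)
  rw [hL, List.pairwise_append, List.pairwise_cons] at hpw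
  refine ⟨fun hb => ?_, fun hb => ?_⟩
  · rcases hpw.2.2 b hb b List.mem_cons_self with h | h <;> omega
  · rcases hpw.2.1.1 b hb with h | h <;> omega

end ReadingOrder

theorem revrowEntriesM_update {lam : List ℕ} {L₁ L₂ : List (ℕ × ℕ)} {b : ℕ × ℕ}
    (hL : revrowBoxes lam = L₁ ++ b :: L₂) (T : ℕ × ℕ → Multiset ℕ) (M : Multiset ℕ) :
    revrowEntriesM lam (Function.update T b M) =
      L₁.flatMap (fun c => (sortDesc (T c)).map fun v => (c, v)) ++
        (sortDesc M).map (fun v => (b, v)) ++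
          L₂.flatMap (fun c => (sortDesc (T c)).map fun v => (c, v)) := by
  obtain ⟨hb₁, hb₂⟩ := not_mem_of_revrowBoxes_eq hL
  have hcongr : ∀ L : List (ℕ × ℕ), b ∉ L →
      L.flatMap (fun c => (sortDesc (Function.update T b M c)).map fun v => (c, v)) =
        L.flatMap (fun c => (sortDesc (T c)).map fun v => (c, v)) := fun L hL =>
    List.flatMap_congr fun c hc => by rw [Function.update_of_ne (ne_of_mem_of_not_mem hc hL)]
  rw [revrowEntriesM_eq, hL, List.flatMap_append, List.flatMap_cons, hcongr L₁ hb₁, hcongr L₂ hb₂,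
    Function.update_self, List.append_assoc]

theorem cons_erase_box_conditions {M : Multiset ℕ} {a a' : ℕ} (ha' : a' ≠ 0)
    (hM : 0 ∉ M ∧ ∀ v : ℕ, v ≠ 1 → M.count v ≤ 1) (hfresh : a' ≠ 1 → a' ∉ M) :
    a' ::ₘ M.erase a ≠ 0 ∧ 0 ∉ a' ::ₘ M.erase a ∧
      ∀ v : ℕ, v ≠ 1 → (a' ::ₘ M.erase a).count v ≤ 1 := by
  refine ⟨Multiset.cons_ne_zero, fun h => ?_, fun v hv => ?_⟩
  · rcases Multiset.mem_cons.1 h with h | h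
    exacts [ha' h.symm, hM.1 (Multiset.mem_of_mem_erase h)]
  · have hle := Multiset.count_le_of_le v (Multiset.erase_le a M)
    rw [Multiset.count_cons]
    split_ifs with hva
    · subst hva
      have := Multiset.count_eq_zero.2 (hfresh hv)
      omega
    · exact hle.trans (hM.2 v hv)

section MultisetDecompTab

variable {lam : List ℕ} {T : ℕ × ℕ → Multiset ℕ} {a a' : ℕ} {b : ℕ × ℕ}

theorem IsMultisetDecompTab.update_swap (hT : IsMultisetDecompTab lam T) {r c : ℕ}
    (hbox : InSD lam r c) (ha : 1 ≤ a ∧ a ≤ 2) (ha' : 1 ≤ a' ∧ a' ≤ 2) (haT : a ∈ T (r, c))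
    (hfresh : a' ≠ 1 → a' ∉ T (r, c))
    (hbefore : ∀ i j, InSD lam i j → ReadsBefore (i, j) (r, c) → ∀ v ∈ T (i, j), 3 ≤ v) :
    IsMultisetDecompTab lam (Function.update T (r, c) (a' ::ₘ (T (r, c)).erase a)) := by
  refine ⟨fun i j hij => ?_, fun d hd => ?_⟩
  · rcases eq_or_ne (i, j) (r, c) with hb | hb
    · rw [hb, Function.update_self]
      exact cons_erase_box_conditions (by omega) (hT.1 r c hbox).2 hfresh
    · rw [Function.update_of_ne hb]
      exact hT.1 i j hij
  have hd' : ∀ i j, InSD lam i j → (i, j) ≠ (r, c) → d (i, j) ∈ T (i, j) := fun i j hij hb => by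
    simpa [Function.update_of_ne hb] using hd i j hij
  by_cases hdb : d (r, c) ∈ T (r, c)
  · refine hT.2 d fun i j hij => ?_
    rcases eq_or_ne (i, j) (r, c) with hb | hb
    exacts [hb ▸ hdb, hd' i j hij hb]
  have hda' : d (r, c) = a' := by
    have := hd r c hbox
    rw [Function.update_self] at this
    exact (Multiset.mem_cons.1 this).resolve_right fun h => hdb (Multiset.mem_of_mem_erase h)
  have hdist : ∀ i j, InSD lam i j → Function.update d (r, c) a (i, j) ∈ T (i, j) := by
    intro i j hij
    rcases eq_or_ne (i, j) (r, c) with hb | hb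
    · rw [hb, Function.update_self]; exact haT
    · rw [Function.update_of_ne hb]; exact hd' i j hij hb
  have hsmall := (hT.2 _ hdist).update_small hbox (by simpa using ha) ha' fun i j hij hr => by
    have hb : (i, j) ≠ (r, c) := fun h => by
      simp only [Prod.mk.injEq] at h
      rcases hr with h' | h' <;> omega
    rw [Function.update_of_ne hb]
    exact hbefore i j hij hr _ (hd' i j hij hb)
  rwa [Function.update_idem, ← hda', Function.update_eq_self] at hsmall

theorem IsMultisetDecompTab.exists_split_first (hT : IsMultisetDecompTab lam T)
    (ha : a = 1 ∧ a' = 2 ∨ a = 2 ∧ a' = 1)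
    (h : ∃ p, p < (revrowWordM lam T).length ∧ (revrowWordM lam T).getD p 0 = a ∧
      ∀ q < p, (revrowWordM lam T).getD q 0 ≠ a')
    (hb : b = ((revrowEntriesM lam T).getD (Nat.find h) ((0, 0), 0)).1) :
    ∃ L₁ L₂ s₁ s₂, revrowBoxes lam = L₁ ++ b :: L₂ ∧ sortDesc (T b) = s₁ ++ a :: s₂ ∧
      (∀ c ∈ L₁, ∀ v ∈ T c, 3 ≤ v) ∧ ∀ z ∈ s₁, 3 ≤ z := by
  have hpos : ∀ e ∈ revrowEntriesM lam T, e.2 ≠ 0 := by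
    intro e he h0
    rw [revrowEntriesM_eq, List.mem_flatMap] at he
    obtain ⟨c, hc, hec⟩ := he
    obtain ⟨v, hv, rfl⟩ := List.mem_map.1 hec
    exact (hT.1 c.1 c.2 (mem_revrowBoxes.1 hc)).2.1 (h0 ▸ mem_sortDesc.1 hv)
  obtain ⟨Q, R, hE, hQ⟩ := exists_eq_append_cons_at_find (E := revrowEntriesM lam T) ha hpos h hb
  rw [revrowEntriesM_eq] at hE
  obtain ⟨L₁, L₂, s₁, s₂, hL, hs, rfl, -⟩ := exists_split_of_flatMap_eq_append_cons hE
  refine ⟨L₁, L₂, s₁, s₂, hL, hs, fun c hc v hv => ?_, fun z hz => ?_⟩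
  · exact hQ (c, v) (List.mem_append_left _
      (List.mem_flatMap.2 ⟨c, hc, List.mem_map.2 ⟨v, mem_sortDesc.2 hv, rfl⟩⟩))
  · exact hQ (b, z) (List.mem_append_right _ (List.mem_map_of_mem hz))

theorem IsMultisetDecompTab.update_first (hT : IsMultisetDecompTab lam T)
    (ha : a = 1 ∧ a' = 2 ∨ a = 2 ∧ a' = 1)
    (h : ∃ p, p < (revrowWordM lam T).length ∧ (revrowWordM lam T).getD p 0 = a ∧
      ∀ q < p, (revrowWordM lam T).getD q 0 ≠ a')
    (hb : b = ((revrowEntriesM lam T).getD (Nat.find h) ((0, 0), 0)).1) :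
    IsMultisetDecompTab lam (Function.update T b (a' ::ₘ (T b).erase a)) := by
  obtain ⟨L₁, L₂, s₁, s₂, hL, hs, hL₁, hs₁⟩ := hT.exists_split_first ha h hb
  have hbox := inSD_of_revrowBoxes_eq hL
  obtain ⟨r, c⟩ := b
  refine hT.update_swap hbox (by rcases ha with ⟨rfl, rfl⟩ | ⟨rfl, rfl⟩ <;> simp)
    (by rcases ha with ⟨rfl, rfl⟩ | ⟨rfl, rfl⟩ <;> simp) (mem_sortDesc.1 (by simp [hs]))
    (not_mem_of_sortDesc_eq_of_swap ha hs hs₁) fun i j hij hr => ?_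
  exact hL₁ _ (mem_of_readsBefore hL (mem_revrowBoxes.2 hij) hr)

theorem IsMultisetDecompTab.revrowEntriesM_update_first (hT : IsMultisetDecompTab lam T)
    (ha : a = 1 ∧ a' = 2 ∨ a = 2 ∧ a' = 1)
    (h : ∃ p, p < (revrowWordM lam T).length ∧ (revrowWordM lam T).getD p 0 = a ∧
      ∀ q < p, (revrowWordM lam T).getD q 0 ≠ a')
    (hb : b = ((revrowEntriesM lam T).getD (Nat.find h) ((0, 0), 0)).1) :
    ∃ Q R, revrowEntriesM lam (Function.update T b (a' ::ₘ (T b).erase a)) = Q ++ (b, a') :: R ∧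
      ∀ e ∈ Q, 3 ≤ e.2 := by
  obtain ⟨L₁, L₂, s₁, s₂, hL, hs, hL₁, hs₁⟩ := hT.exists_split_first ha h hb
  have hbox := inSD_of_revrowBoxes_eq hL
  obtain ⟨-, h0, hcount⟩ := hT.1 b.1 b.2 hbox
  have hsort : sortDesc (a' ::ₘ (T b).erase a) = s₁ ++ a' :: s₂ :=
    sortDesc_cons_erase hs (fun z hz => by
      have := hs₁ z hz
      rcases ha with ⟨rfl, rfl⟩ | ⟨rfl, rfl⟩ <;> omega)
      fun z hz => le_of_mem_of_sortDesc_eq_of_swap ha h0 (hcount 2 (by norm_num)) hs hz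
  refine ⟨L₁.flatMap (fun c => (sortDesc (T c)).map fun v => (c, v)) ++ s₁.map fun v => (b, v),
    s₂.map (fun v => (b, v)) ++ L₂.flatMap (fun c => (sortDesc (T c)).map fun v => (c, v)),
    by rw [revrowEntriesM_update hL, hsort]; simp, fun e he => ?_⟩
  rcases List.mem_append.1 he with he | he
  · obtain ⟨c, hc, hec⟩ := List.mem_flatMap.1 he
    obtain ⟨v, hv, rfl⟩ := List.mem_map.1 hec
    exact hL₁ c hc v (mem_sortDesc.1 hv)
  · obtain ⟨z, hz, rfl⟩ := List.mem_map.1 he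
    exact hs₁ z hz

theorem IsMultisetDecompTab.swap_first (hT : IsMultisetDecompTab lam T)
    (ha : a = 1 ∧ a' = 2 ∨ a = 2 ∧ a' = 1)
    (h : ∃ p, p < (revrowWordM lam T).length ∧ (revrowWordM lam T).getD p 0 = a ∧
      ∀ q < p, (revrowWordM lam T).getD q 0 ≠ a')
    (hb : b = ((revrowEntriesM lam T).getD (Nat.find h) ((0, 0), 0)).1)
    {U : ℕ × ℕ → Multiset ℕ} (hU : U = Function.update T b (a' ::ₘ (T b).erase a)) :
    IsMultisetDecompTab lam U ∧
      ∃ h' : (∃ p, p < (revrowWordM lam U).length ∧ (revrowWordM lam U).getD p 0 = a' ∧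
          ∀ q < p, (revrowWordM lam U).getD q 0 ≠ a),
        Function.update U ((revrowEntriesM lam U).getD (Nat.find h') ((0, 0), 0)).1
          (a ::ₘ (U ((revrowEntriesM lam U).getD (Nat.find h') ((0, 0), 0)).1).erase a') = T := by
  obtain ⟨Q, R, hEU, hQ⟩ := hT.revrowEntriesM_update_first ha h hb
  rw [← hU] at hEU
  obtain ⟨h', hfind⟩ := exists_find_eq_length_of_eq_append_cons (y := a) (w := revrowWordM lam U)
    rfl hEU hQ (by rcases ha with ⟨rfl, rfl⟩ | ⟨rfl, rfl⟩ <;> simp)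
    (by rcases ha with ⟨rfl, rfl⟩ | ⟨rfl, rfl⟩ <;> simp)
  have haT : a ∈ T b := by
    obtain ⟨L₁, L₂, s₁, s₂, -, hs, -⟩ := hT.exists_split_first ha h hb
    exact mem_sortDesc.1 (by simp [hs])
  refine ⟨hU ▸ hT.update_first ha h hb, h', ?_⟩
  rw [hfind, hEU, getD_append_cons_length, hU, Function.update_self, Multiset.erase_cons_head,
    Multiset.cons_erase haT, Function.update_idem, Function.update_eq_self]

end MultisetDecompTab

theorem eStarBar_eq_some {lam : List ℕ} {T U : ℕ × ℕ → Multiset ℕ} (hT : IsMultisetDecompTab lam T)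
    (hTU : eStarBar lam T = some U) : IsMultisetDecompTab lam U ∧ fStarBar lam U = some T := by
  rw [eStarBar] at hTU
  split_ifs at hTU with h
  obtain ⟨hU, h', hT'⟩ := hT.swap_first (Or.inr ⟨rfl, rfl⟩) h rfl (Option.some.inj hTU).symm
  exact ⟨hU, by rw [fStarBar, dif_pos h']; exact congrArg some hT'⟩

theorem fStarBar_eq_some {lam : List ℕ} {T U : ℕ × ℕ → Multiset ℕ} (hT : IsMultisetDecompTab lam T)
    (hTU : fStarBar lam T = some U) : IsMultisetDecompTab lam U ∧ eStarBar lam U = some T := by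
  rw [fStarBar] at hTU
  split_ifs at hTU with h
  obtain ⟨hU, h', hT'⟩ := hT.swap_first (Or.inl ⟨rfl, rfl⟩) h rfl (Option.some.inj hTU).symm
  exact ⟨hU, by rw [eStarBar, dif_pos h']; exact congrArg some hT'⟩

theorem stmt1_general (lam : List ℕ) :
    (∀ T : ℕ × ℕ → Multiset ℕ, IsMultisetDecompTab lam T →
      ∀ U, eStarBar lam T = some U → IsMultisetDecompTab lam U) ∧
    (∀ T : ℕ × ℕ → Multiset ℕ, IsMultisetDecompTab lam T →
      ∀ U, fStarBar lam T = some U → IsMultisetDecompTab lam U) ∧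
    (∀ T U : ℕ × ℕ → Multiset ℕ, IsMultisetDecompTab lam T → IsMultisetDecompTab lam U →
      (eStarBar lam T = some U ↔ fStarBar lam U = some T)) :=
  ⟨fun _ hT _ hTU => (eStarBar_eq_some hT hTU).1, fun _ hT _ hTU => (fStarBar_eq_some hT hTU).1,
    fun _ _ hT hU => ⟨fun h => (eStarBar_eq_some hT h).2, fun h => (fStarBar_eq_some hU h).2⟩⟩

/-- the operators `e*_1̄` and `f*_1̄` define maps
`SetDecTab*(λ) → SetDecTab*(λ) ⊔ {0}`, and `e*_1̄(T) = U` iff `T = f*_1̄(U)`. -/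
theorem stmt1 (lam : List ℕ) (hlam : IsStrictPartition lam) :
    (∀ T : ℕ × ℕ → Multiset ℕ, IsMultisetDecompTab lam T →
      ∀ U, eStarBar lam T = some U → IsMultisetDecompTab lam U) ∧
    (∀ T : ℕ × ℕ → Multiset ℕ, IsMultisetDecompTab lam T →
      ∀ U, fStarBar lam T = some U → IsMultisetDecompTab lam U) ∧
    (∀ T U : ℕ × ℕ → Multiset ℕ, IsMultisetDecompTab lam T → IsMultisetDecompTab lam U →
      (eStarBar lam T = some U ↔ fStarBar lam U = some T)) :=
  stmt1_general lam
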